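/- arXiv:2408.10662 — 3 statements merged into one kernel-verified Lean document; each statement's English description precedes it below -/
import Mathlib

section
/- Let X be a nonnegative random variable with E[X²] < ∞ and let 1 < τ < 2. Then ∑_{n=1}^∞ n^{-τ} · E[X^{2τ}·1_{X ≤ √(2n)}] < ∞. -/
open MeasureTheory Real Set

/-- Key elementary inequality: for `a ≥ 1` and `τ > 1`,
`(τ-1) * (a+1)^(-τ) ≤ a^(1-τ) - (a+1)^(1-τ)`. -/
lemma bern_step (τ : ℝ) (hτ1 : 1 < τ) (a : ℝ) (ha : 1 ≤ a) :
    (τ - 1) * (a + 1) ^ (-τ) ≤ a ^ (1 - τ) - (a + 1) ^ (1 - τ) := by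
  have ha0 : (0:ℝ) < a := lt_of_lt_of_le one_pos ha
  have ha1 : (0:ℝ) < a + 1 := by linarith
  -- Bernoulli: (1 + 1/a)^τ ≥ 1 + τ/a
  have hb : 1 + τ * (1 / a) ≤ (1 + 1 / a) ^ τ := by
    apply one_add_mul_self_le_rpow_one_add _ hτ1.le
    have : (0:ℝ) ≤ 1 / a := by positivity
    linarith
  have hmul : a + 1 = a * (1 + 1 / a) := by field_simp
  have h1a : (0:ℝ) < 1 + 1/a := by positivity
  have hexp : (a + 1) ^ (-τ) = a ^ (-τ) * (1 + 1/a) ^ (-τ) := by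
    rw [hmul, Real.mul_rpow ha0.le h1a.le]
  have hexp1 : (a + 1) ^ (1 - τ) = (a + 1) * (a + 1) ^ (-τ) := by
    rw [show (1 - τ) = 1 + (-τ) by ring, Real.rpow_add ha1, Real.rpow_one]
  have hexp2 : a ^ (1 - τ) = a * a ^ (-τ) := by
    rw [show (1 - τ) = 1 + (-τ) by ring, Real.rpow_add ha0, Real.rpow_one]
  set u := (1 + 1/a) ^ τ with hu
  have hupos : 0 < u := Real.rpow_pos_of_pos h1a τ
  have hinv : (1 + 1/a) ^ (-τ) = u⁻¹ := by
    rw [Real.rpow_neg h1a.le]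
  have hw : (0:ℝ) < a ^ (-τ) := Real.rpow_pos_of_pos ha0 _
  rw [hexp, hexp1, hexp2, hexp, hinv]
  -- reduce to: (τ-1) * u⁻¹ ≤ a - (a+1) * u⁻¹ (after dividing by a^(-τ))
  rw [show (τ - 1) * (a ^ (-τ) * u⁻¹) = a ^ (-τ) * ((τ - 1) * u⁻¹) by ring,
    show a * a ^ (-τ) - (a + 1) * (a ^ (-τ) * u⁻¹) = a ^ (-τ) * (a - (a + 1) * u⁻¹) by ring]
  apply mul_le_mul_of_nonneg_left _ hw.le
  have hau : a + τ ≤ a * u := by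
    have h := mul_le_mul_of_nonneg_left hb ha0.le
    have : a * (1 + τ * (1 / a)) = a + τ := by field_simp
    linarith
  have h2 := mul_le_mul_of_nonneg_right hau (inv_nonneg.mpr hupos.le)
  rw [mul_assoc, mul_inv_cancel₀ hupos.ne', mul_one] at h2
  nlinarith [inv_pos.mpr hupos]

lemma telescope_Ico (f : ℕ → ℝ) (m : ℕ) : ∀ N, m ≤ N →
    ∑ n ∈ Finset.Ico m N, (f n - f (n + 1)) = f m - f N := by
  intro N
  induction N with
  | zero => intro h; interval_cases m; simp
  | succ N ih =>
    intro h
    rcases le_or_gt m N with h' | h'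
    · rw [Finset.sum_Ico_succ_top h', ih h']; ring
    · have : m = N + 1 := by omega
      subst this
      simp

/-- Tail bound for the `p`-series. -/
lemma tail_bound (τ : ℝ) (hτ1 : 1 < τ) (m N : ℕ) (hm : 1 ≤ m) :
    ∑ n ∈ Finset.Ico m N, ((n:ℝ) + 1) ^ (-τ) ≤ (m:ℝ) ^ (1 - τ) / (τ - 1) := by
  have hτ' : (0:ℝ) < τ - 1 := by linarith
  rcases le_or_gt m N with hmN | hmN
  · have h1 : ∑ n ∈ Finset.Ico m N, ((n:ℝ) + 1) ^ (-τ)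
        ≤ ∑ n ∈ Finset.Ico m N, (((n:ℝ)) ^ (1 - τ) - ((n:ℝ) + 1) ^ (1 - τ)) / (τ - 1) := by
      apply Finset.sum_le_sum
      intro n hn
      have hn1 : 1 ≤ n := le_trans hm (Finset.mem_Ico.mp hn).1
      have := bern_step τ hτ1 (n:ℝ) (by exact_mod_cast hn1)
      rw [le_div_iff₀ hτ']
      linarith
    refine h1.trans ?_
    rw [← Finset.sum_div, div_le_div_iff_of_pos_right hτ']
    have htel : ∑ n ∈ Finset.Ico m N, (((n:ℝ)) ^ (1 - τ) - ((n:ℝ) + 1) ^ (1 - τ))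
        = (m:ℝ) ^ (1 - τ) - (N:ℝ) ^ (1 - τ) := by
      have := telescope_Ico (fun k => ((k:ℝ)) ^ (1 - τ)) m N hmN
      simp only [Nat.cast_add, Nat.cast_one] at this
      exact this
    rw [htel]
    have : (0:ℝ) ≤ (N:ℝ) ^ (1 - τ) := Real.rpow_nonneg (Nat.cast_nonneg N) _
    linarith
  · rw [Finset.Ico_eq_empty (by omega), Finset.sum_empty]
    positivity

lemma key_sum (τ : ℝ) (hτ1 : 1 < τ) (hτ2 : τ < 2) (x : ℝ) (hx : 0 ≤ x) (N : ℕ) :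
    ∑ n ∈ Finset.range N, ((n:ℝ) + 1) ^ (-τ) *
      (if x ≤ Real.sqrt (2 * ((n:ℝ) + 1)) then x ^ (2 * τ) else 0)
      ≤ (4:ℝ) ^ (τ - 1) * ((∑' n : ℕ, ((n:ℝ) + 1) ^ (-τ)) + 1 / (τ - 1)) * x ^ 2 := by
  have hτ' : (0:ℝ) < τ - 1 := by linarith
  have hζ : Summable (fun n : ℕ => ((n:ℝ) + 1) ^ (-τ)) := by
    have := (Real.summable_one_div_nat_add_rpow 1 τ).mpr hτ1
    apply this.congr
    intro n
    have h1 : (0:ℝ) < (n:ℝ) + 1 := by positivity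
    rw [abs_of_pos h1, Real.rpow_neg h1.le, one_div]
  set ζ := ∑' n : ℕ, ((n:ℝ) + 1) ^ (-τ) with hζdef
  have hζnn : 0 ≤ ζ := tsum_nonneg fun n => Real.rpow_nonneg (by positivity) _
  have h4 : (0:ℝ) < (4:ℝ) ^ (τ - 1) := Real.rpow_pos_of_pos (by norm_num) _
  rcases eq_or_lt_of_le hx with hx0 | hx0
  · simp [← hx0, Real.zero_rpow (by positivity : (2*τ) ≠ 0)]
  have hterm : ∀ n : ℕ, ((n:ℝ) + 1) ^ (-τ) *
      (if x ≤ Real.sqrt (2 * ((n:ℝ) + 1)) then x ^ (2 * τ) else 0)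
      ≤ ((n:ℝ) + 1) ^ (-τ) * x ^ (2 * τ) := by
    intro n
    apply mul_le_mul_of_nonneg_left _ (Real.rpow_nonneg (by positivity) _)
    split
    · exact le_rfl
    · exact Real.rpow_nonneg hx _
  have hx2rw : x ^ ((2:ℕ):ℝ) = x ^ (2:ℕ) := Real.rpow_natCast x 2
  rcases le_or_gt x 2 with hxle | hxgt
  · -- small x: bound by full series
    calc ∑ n ∈ Finset.range N, ((n:ℝ) + 1) ^ (-τ) *
          (if x ≤ Real.sqrt (2 * ((n:ℝ) + 1)) then x ^ (2 * τ) else 0)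
        ≤ ∑ n ∈ Finset.range N, ((n:ℝ) + 1) ^ (-τ) * x ^ (2 * τ) :=
          Finset.sum_le_sum fun n _ => hterm n
      _ = (∑ n ∈ Finset.range N, ((n:ℝ) + 1) ^ (-τ)) * x ^ (2 * τ) := by
          rw [Finset.sum_mul]
      _ ≤ ζ * x ^ (2 * τ) := by
          apply mul_le_mul_of_nonneg_right _ (Real.rpow_nonneg hx _)
          exact Summable.sum_le_tsum _ (fun n _ => Real.rpow_nonneg (by positivity) _) hζ
      _ ≤ (4:ℝ) ^ (τ - 1) * (ζ + 1 / (τ - 1)) * x ^ 2 := by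
          have hsplit : x ^ (2 * τ) = x ^ (2:ℕ) * x ^ (2 * τ - 2) := by
            rw [← hx2rw, ← Real.rpow_add hx0]
            norm_num
          have hb : x ^ (2 * τ - 2) ≤ (2:ℝ) ^ (2 * τ - 2) :=
            Real.rpow_le_rpow hx hxle (by linarith)
          have h24 : (2:ℝ) ^ (2 * τ - 2) = (4:ℝ) ^ (τ - 1) := by
            rw [show (2*τ-2) = (2:ℕ) * (τ-1) by push_cast; ring,
              Real.rpow_natCast_mul (by norm_num : (0:ℝ) ≤ 2)]
            norm_num
          have hx2nn : (0:ℝ) ≤ x ^ (2:ℕ) := by positivity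
          have h1τ : (0:ℝ) < 1 / (τ - 1) := by positivity
          rw [hsplit]
          have step1 : ζ * (x ^ 2 * x ^ (2 * τ - 2)) ≤ ζ * (x ^ 2 * (4:ℝ) ^ (τ - 1)) := by
            apply mul_le_mul_of_nonneg_left _ hζnn
            apply mul_le_mul_of_nonneg_left _ hx2nn
            rw [← h24]; exact hb
          have step2 : (0:ℝ) ≤ (4:ℝ) ^ (τ - 1) * (1 / (τ - 1)) * x ^ 2 :=
            mul_nonneg (mul_nonneg h4.le h1τ.le) hx2nn
          nlinarith [step1, step2]
  · -- large x: only the tail contributes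
    set m := ⌈x ^ 2 / 2 - 1⌉₊ with hmdef
    have hx2gt : (4:ℝ) < x ^ 2 := by nlinarith
    have hm1 : 1 ≤ m := Nat.one_le_ceil_iff.mpr (by nlinarith)
    have hzero : ∀ n ∈ Finset.range N, n ∉ Finset.Ico m N →
        ((n:ℝ) + 1) ^ (-τ) * (if x ≤ Real.sqrt (2 * ((n:ℝ) + 1)) then x ^ (2 * τ) else 0) = 0 := by
      intro n hn hn'
      have hnm : n < m := by
        simp only [Finset.mem_range] at hn
        simp only [Finset.mem_Ico, not_and, not_lt] at hn'
        by_contra h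
        exact absurd (hn' (by omega)) (by omega)
      have hcast : (n:ℝ) < x ^ 2 / 2 - 1 := Nat.lt_ceil.mp hnm
      have : Real.sqrt (2 * ((n:ℝ) + 1)) < x := by
        rw [Real.sqrt_lt' hx0]
        nlinarith
      rw [if_neg (not_le.mpr this), mul_zero]
    have hsubset : Finset.Ico m N ⊆ Finset.range N := by
      rw [Finset.range_eq_Ico]; exact Finset.Ico_subset_Ico (Nat.zero_le m) le_rfl
    rw [← Finset.sum_subset hsubset hzero]
    calc ∑ n ∈ Finset.Ico m N, ((n:ℝ) + 1) ^ (-τ) *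
          (if x ≤ Real.sqrt (2 * ((n:ℝ) + 1)) then x ^ (2 * τ) else 0)
        ≤ ∑ n ∈ Finset.Ico m N, ((n:ℝ) + 1) ^ (-τ) * x ^ (2 * τ) :=
          Finset.sum_le_sum fun n _ => hterm n
      _ = (∑ n ∈ Finset.Ico m N, ((n:ℝ) + 1) ^ (-τ)) * x ^ (2 * τ) := by
          rw [Finset.sum_mul]
      _ ≤ ((m:ℝ) ^ (1 - τ) / (τ - 1)) * x ^ (2 * τ) := by
          apply mul_le_mul_of_nonneg_right (tail_bound τ hτ1 m N hm1) (Real.rpow_nonneg hx _)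
      _ ≤ (4:ℝ) ^ (τ - 1) * (ζ + 1 / (τ - 1)) * x ^ 2 := by
          have hmge : x ^ 2 / 4 ≤ (m:ℝ) := by
            have := Nat.le_ceil (x ^ 2 / 2 - 1)
            rw [← hmdef] at this
            nlinarith
          have hq : (0:ℝ) < x ^ 2 / 4 := by nlinarith
          have hmono : (m:ℝ) ^ (1 - τ) ≤ (x ^ 2 / 4) ^ (1 - τ) :=
            Real.rpow_le_rpow_of_nonpos hq hmge (by linarith)
          have hcalc : (x ^ 2 / 4) ^ (1 - τ) * x ^ (2 * τ) = (4:ℝ) ^ (τ - 1) * x ^ 2 := by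
            rw [Real.div_rpow (by positivity) (by norm_num : (0:ℝ) ≤ 4)]
            have h1 : (x ^ 2) ^ (1 - τ) = x ^ (2 * (1 - τ)) := by
              rw [← hx2rw, ← Real.rpow_mul hx]
              norm_num
            have h2 : (4:ℝ) ^ (1 - τ) = ((4:ℝ) ^ (τ - 1))⁻¹ := by
              rw [show (1 - τ) = -(τ-1) by ring, Real.rpow_neg (by norm_num : (0:ℝ) ≤ 4)]
            have h3 : x ^ (2 * (1 - τ)) * x ^ (2 * τ) = x ^ 2 := by
              rw [← Real.rpow_add hx0,
                show 2 * (1 - τ) + 2 * τ = ((2:ℕ):ℝ) by push_cast; ring, Real.rpow_natCast]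
            rw [h1, h2, div_eq_mul_inv, inv_inv]
            rw [show x ^ (2 * (1 - τ)) * (4:ℝ) ^ (τ - 1) * x ^ (2 * τ)
              = (4:ℝ) ^ (τ - 1) * (x ^ (2 * (1 - τ)) * x ^ (2 * τ)) by ring, h3]
          have h1τ : (0:ℝ) ≤ 1 / (τ - 1) := by positivity
          have hxτnn : (0:ℝ) ≤ x ^ (2*τ) := Real.rpow_nonneg hx _
          calc (m:ℝ) ^ (1 - τ) / (τ - 1) * x ^ (2 * τ)
              ≤ (x ^ 2 / 4) ^ (1 - τ) / (τ - 1) * x ^ (2 * τ) := by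
                apply mul_le_mul_of_nonneg_right _ hxτnn
                exact div_le_div_of_nonneg_right hmono hτ'.le |>.trans_eq rfl
            _ = ((4:ℝ) ^ (τ - 1) * x ^ 2) / (τ - 1) := by
                rw [div_mul_eq_mul_div, hcalc]
            _ ≤ (4:ℝ) ^ (τ - 1) * (ζ + 1 / (τ - 1)) * x ^ 2 := by
                rw [div_eq_mul_one_div, show (4:ℝ)^(τ-1) * x^2 * (1/(τ-1))
                  = (4:ℝ)^(τ-1) * (1/(τ-1)) * x^2 by ring]
                apply mul_le_mul_of_nonneg_right _ (by positivity)
                apply mul_le_mul_of_nonneg_left _ h4.le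
                linarith
  
theorem stmt5 {Ω : Type*} [MeasurableSpace Ω] (ℙ : Measure Ω) [IsProbabilityMeasure ℙ]
    (X : Ω → ℝ) (hXm : Measurable X) (hXnn : ∀ ω, 0 ≤ X ω)
    (hX2 : Integrable (fun ω => X ω ^ 2) ℙ)
    (τ : ℝ) (hτ1 : 1 < τ) (hτ2 : τ < 2) :
    Summable (fun n : ℕ => ((n : ℝ) + 1) ^ (-τ) *
      ∫ ω in {ω | X ω ≤ Real.sqrt (2 * ((n : ℝ) + 1))}, X ω ^ (2 * τ) ∂ℙ) := by
  set C := (4:ℝ) ^ (τ - 1) * ((∑' n : ℕ, ((n:ℝ) + 1) ^ (-τ)) + 1 / (τ - 1)) with hCdef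
  set S : ℕ → Set Ω := fun n => {ω | X ω ≤ Real.sqrt (2 * ((n : ℝ) + 1))} with hSdef
  have hSm : ∀ n, MeasurableSet (S n) := fun n => hXm measurableSet_Iic
  have hrpowm : Measurable (fun ω => X ω ^ (2 * τ)) := hXm.pow measurable_const
  have hint : ∀ n : ℕ, Integrable ((S n).indicator (fun ω => X ω ^ (2 * τ))) ℙ := by
    intro n
    apply Integrable.mono' (integrable_const ((Real.sqrt (2 * ((n:ℝ) + 1))) ^ (2 * τ)))
      ((hrpowm.indicator (hSm n)).aestronglyMeasurable)
    filter_upwards with ω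
    rw [Set.indicator_apply]
    split
    · next h =>
      rw [Real.norm_eq_abs, abs_of_nonneg (Real.rpow_nonneg (hXnn ω) _)]
      exact Real.rpow_le_rpow (hXnn ω) h (by linarith)
    · simp only [norm_zero]
      positivity
  apply summable_of_sum_range_le (c := C * ∫ ω, X ω ^ 2 ∂ℙ)
  · intro n
    apply mul_nonneg (Real.rpow_nonneg (by positivity) _)
    exact integral_nonneg fun ω => Real.rpow_nonneg (hXnn ω) _
  · intro N
    have hrw : ∀ n : ℕ, ((n:ℝ) + 1) ^ (-τ) * ∫ ω in S n, X ω ^ (2 * τ) ∂ℙ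
        = ∫ ω, ((n:ℝ) + 1) ^ (-τ) * (S n).indicator (fun ω => X ω ^ (2 * τ)) ω ∂ℙ := by
      intro n
      rw [integral_const_mul, integral_indicator (hSm n)]
    calc ∑ n ∈ Finset.range N, ((n:ℝ) + 1) ^ (-τ) * ∫ ω in S n, X ω ^ (2 * τ) ∂ℙ
        = ∑ n ∈ Finset.range N,
            ∫ ω, ((n:ℝ) + 1) ^ (-τ) * (S n).indicator (fun ω => X ω ^ (2 * τ)) ω ∂ℙ :=
          Finset.sum_congr rfl fun n _ => hrw n
      _ = ∫ ω, ∑ n ∈ Finset.range N,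
            ((n:ℝ) + 1) ^ (-τ) * (S n).indicator (fun ω => X ω ^ (2 * τ)) ω ∂ℙ :=
          (integral_finset_sum _ (fun n _ => (hint n).const_mul _)).symm
      _ ≤ ∫ ω, C * X ω ^ 2 ∂ℙ := by
          apply integral_mono
            (integrable_finset_sum _ (fun n _ => (hint n).const_mul _)) (hX2.const_mul C)
          intro ω
          simp only [Set.indicator_apply, hSdef, Set.mem_setOf_eq]
          exact key_sum τ hτ1 hτ2 (X ω) (hXnn ω) N
      _ = C * ∫ ω, X ω ^ 2 ∂ℙ := integral_const_mul C _
end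

section
/- Let X₁,…,X_n be independent (or negatively associated) mean-zero random variables on a probability space, and write B_n = ∑_{i=1}^n E[X_i²]. Then for any x > 0 and α > 0: P(∑_{i=1}^n X_i ≥ x) ≤ P(max_{1≤j≤n} X_j > α) + exp{ −x²/(2(αx + B_n)) · [1 + (2/3)·ln(1 + αx/B_n)] }. -/
/-!
Truncate at `α`: off the event `{∃ j, α < X j}` the sum `∑ X i` equals `∑ Y i` with
`Y i = min (X i) α`, and the `Y i` are independent, bounded above by `α`, of nonpositive mean and
with `E[Y i ^ 2] ≤ E[X i ^ 2]`. Since `t ↦ (exp t - 1 - t) / t ^ 2` is nondecreasing, this gives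
Bennett's bound `E[exp (l * Y i)] ≤ exp (E[Y i ^ 2] * (exp (l * α) - 1 - l * α) / α ^ 2)`, and the
Chernoff bound for `∑ Y i` at `l = log (1 + α * x / B) / α` (the minimiser of the exponent) is
turned into Zhang's exponent by the rational lower bound
`log (1 + u) ≥ 3u(3u + 2) / (2(2u² + 6u + 3))`.
-/

open MeasureTheory Real ProbabilityTheory Finset
open scoped Nat

namespace Real

lemma exp_le_one_add_add_sq_div_two {t : ℝ} (ht : t ≤ 0) : exp t ≤ 1 + t + t ^ 2 / 2 := by
  have hanti : Antitone fun s => 1 + s + s ^ 2 / 2 - exp s :=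
    antitone_of_hasDerivAt_nonpos (f' := fun s => 1 + s - exp s)
      (fun s => ((((hasDerivAt_id s).const_add 1).add ((hasDerivAt_pow 2 s).div_const 2)).sub
          (hasDerivAt_exp s)).congr_deriv (by norm_num))
      (fun s => by simp only [Pi.zero_apply]; linarith [add_one_le_exp s])
  simpa using hanti ht

lemma exp_sub_one_sub_eq_sq_mul_tsum (t : ℝ) :
    exp t - 1 - t = t ^ 2 * ∑' n : ℕ, t ^ n / (n + 2)! := by
  rw [exp_eq_exp_ℝ, NormedSpace.exp_eq_tsum_div]
  beta_reduce
  rw [← (summable_pow_div_factorial t).sum_add_tsum_nat_add 2, ← tsum_mul_left]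
  simp only [sum_range_succ, range_one, sum_singleton, pow_zero, Nat.factorial_zero, Nat.cast_one,
    ne_eq, one_ne_zero, not_false_eq_true, div_self, pow_one, Nat.factorial_one, div_one, pow_add]
  ring_nf

lemma exp_sub_one_sub_le_of_le {t T : ℝ} (htT : t ≤ T) (hT : 0 < T) :
    exp t - 1 - t ≤ t ^ 2 / T ^ 2 * (exp T - 1 - T) := by
  have hsum {s : ℝ} (hs : 0 ≤ s) : Summable fun n : ℕ => s ^ n / (n + 2)! :=
    (summable_pow_div_factorial s).of_nonneg_of_le (fun n => by positivity) fun n => by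
      gcongr
      omega
  rw [exp_sub_one_sub_eq_sq_mul_tsum T, ← mul_assoc, div_mul_cancel₀ _ (by positivity)]
  rcases le_total 0 t with ht | ht
  · rw [exp_sub_one_sub_eq_sq_mul_tsum t]
    refine mul_le_mul_of_nonneg_left ?_ (sq_nonneg t)
    exact (hsum ht).tsum_le_tsum (fun n => by gcongr) (hsum hT.le)
  · have hhalf : 1 / 2 ≤ ∑' n : ℕ, T ^ n / (n + 2)! := by
      simpa using (hsum hT.le).le_tsum 0 fun n _ => by positivity
    nlinarith [exp_le_one_add_add_sq_div_two ht, sq_nonneg t]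

lemma rational_le_log_one_add {u : ℝ} (hu : 0 ≤ u) :
    3 * u * (3 * u + 2) / (2 * (2 * u ^ 2 + 6 * u + 3)) ≤ log (1 + u) := by
  have hderiv : ∀ s, 0 ≤ s → HasDerivAt
      (fun s => log (1 + s) - 3 * s * (3 * s + 2) / (2 * (2 * s ^ 2 + 6 * s + 3)))
      (s ^ 3 * (4 * s + 3) / ((1 + s) * (2 * s ^ 2 + 6 * s + 3) ^ 2)) s := by
    intro s hs
    have h1 : 1 + s ≠ 0 := by positivity
    have h2 : 2 * (2 * s ^ 2 + 6 * s + 3) ≠ 0 := by positivity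
    have := (((hasDerivAt_id s).const_add 1).log h1).sub
      ((((hasDerivAt_id s).const_mul 3).mul (((hasDerivAt_id s).const_mul 3).add_const 2)).div
        ((((hasDerivAt_pow 2 s).const_mul 2).add ((hasDerivAt_id s).const_mul 6)).add_const 3
          |>.const_mul 2) h2)
    refine this.congr_deriv ?_
    simp only [id, Pi.add_apply, Pi.mul_apply]
    field_simp
    ring
  have hmono : MonotoneOn
      (fun s => log (1 + s) - 3 * s * (3 * s + 2) / (2 * (2 * s ^ 2 + 6 * s + 3))) (Set.Ici 0) :=
    monotoneOn_of_hasDerivWithinAt_nonneg (convex_Ici 0)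
      (fun s hs => (hderiv s hs).continuousAt.continuousWithinAt)
      (fun s hs => (hderiv s (interior_subset hs)).hasDerivWithinAt)
      (fun s hs => by have := interior_subset hs; simp only [Set.mem_Ici] at this; positivity)
  simpa using hmono Set.self_mem_Ici (Set.mem_Ici.2 hu) hu

end Real

lemma bennett_exponent_le {α x B : ℝ} (hα : 0 < α) (hx : 0 < x) (hB : 0 < B) :
    -(log (1 + α * x / B) / α) * x +
        (exp (log (1 + α * x / B) / α * α) - 1 - log (1 + α * x / B) / α * α) / α ^ 2 * B ≤
      -(x ^ 2) / (2 * (α * x + B)) * (1 + 2 / 3 * log (1 + α * x / B)) := by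
  set u := α * x / B with hu
  have hu0 : 0 < u := by positivity
  have hlog := rational_le_log_one_add hu0.le
  set L := log (1 + u)
  rw [div_mul_cancel₀ _ hα.ne', exp_log (by positivity)]
  have hx : x = u * B / α := by rw [hu]; field_simp
  rw [div_le_iff₀ (by positivity)] at hlog
  rw [hx, ← sub_nonneg]
  have key : -(u * B / α) ^ 2 / (2 * (α * (u * B / α) + B)) * (1 + 2 / 3 * L) -
      (-(L / α) * (u * B / α) + (1 + u - 1 - L) / α ^ 2 * B) =
      B / (6 * α ^ 2 * (1 + u)) * (L * (2 * (2 * u ^ 2 + 6 * u + 3)) - 3 * u * (3 * u + 2)) := by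
    field_simp
    ring
  rw [key]
  apply mul_nonneg (by positivity)
  linarith

lemma sq_min_le_sq {a b : ℝ} (hb : 0 ≤ b) : min a b ^ 2 ≤ a ^ 2 := by
  rcases le_total a b with h | h
  · rw [min_eq_left h]
  · rw [min_eq_right h]
    nlinarith

section Probability

variable {Ω : Type*} [MeasurableSpace Ω] {μ : Measure Ω}

lemma MeasureTheory.Integrable.sq_min_const {f : Ω → ℝ} (hf : AEStronglyMeasurable f μ)
    (hf2 : Integrable (fun ω => f ω ^ 2) μ) {c : ℝ} (hc : 0 ≤ c) :
    Integrable (fun ω => min (f ω) c ^ 2) μ :=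
  hf2.mono' ((hf.inf aestronglyMeasurable_const).pow 2) <| ae_of_all _ fun ω => by
    simpa only [Real.norm_eq_abs, abs_sq] using sq_min_le_sq hc

lemma mgf_le_exp_of_le [IsProbabilityMeasure μ] {Y : Ω → ℝ} {a l : ℝ} (hYm : AEMeasurable Y μ)
    (ha : 0 < a) (hl : 0 < l) (hY : ∀ᵐ ω ∂μ, Y ω ≤ a) (hY2 : Integrable (fun ω => Y ω ^ 2) μ)
    (hmean : μ[Y] ≤ 0) :
    mgf Y μ l ≤ exp ((exp (l * a) - 1 - l * a) / a ^ 2 * ∫ ω, Y ω ^ 2 ∂μ) := by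
  set c := (exp (l * a) - 1 - l * a) / a ^ 2
  have hc : 0 ≤ c := div_nonneg (by linarith [add_one_le_exp (l * a)]) (sq_nonneg a)
  have hY1 : Integrable Y μ :=
    ((memLp_two_iff_integrable_sq hYm.aestronglyMeasurable).2 hY2).integrable one_le_two
  have hpoint : ∀ᵐ ω ∂μ, exp (l * Y ω) ≤ 1 + l * Y ω + c * Y ω ^ 2 := by
    filter_upwards [hY] with ω hω
    have := exp_sub_one_sub_le_of_le (mul_le_mul_of_nonneg_left hω hl.le) (mul_pos hl ha)
    have hsq : (l * Y ω) ^ 2 / (l * a) ^ 2 * (exp (l * a) - 1 - l * a) = c * Y ω ^ 2 := by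
      simp only [c]
      field_simp
    linarith
  have hlin : Integrable (fun ω => 1 + l * Y ω) μ := (integrable_const 1).add (hY1.const_mul l)
  have hint : Integrable (fun ω => 1 + l * Y ω + c * Y ω ^ 2) μ := hlin.add (hY2.const_mul c)
  calc mgf Y μ l ≤ ∫ ω, 1 + l * Y ω + c * Y ω ^ 2 ∂μ :=
        integral_mono_ae (integrable_exp_mul_of_le l a hl.le hYm hY) hint hpoint
    _ = 1 + l * μ[Y] + c * ∫ ω, Y ω ^ 2 ∂μ := by
        rw [integral_add hlin (hY2.const_mul c),
          integral_add (integrable_const 1) (hY1.const_mul l), integral_const_mul,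
          integral_const_mul]
        simp
    _ ≤ 1 + c * ∫ ω, Y ω ^ 2 ∂μ := by nlinarith
    _ ≤ exp (c * ∫ ω, Y ω ^ 2 ∂μ) := by linarith [add_one_le_exp (c * ∫ ω, Y ω ^ 2 ∂μ)]

lemma measureReal_le_sum_le_exp [IsProbabilityMeasure μ] {ι : Type*} [Fintype ι]
    {Y : ι → Ω → ℝ} (hYm : ∀ i, Measurable (Y i)) (hind : iIndepFun Y μ) {a l s : ℝ}
    (ha : 0 < a) (hl : 0 < l) (hY : ∀ i, ∀ᵐ ω ∂μ, Y i ω ≤ a)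
    (hY2 : ∀ i, Integrable (fun ω => Y i ω ^ 2) μ) (hmean : ∀ i, μ[Y i] ≤ 0)
    (hs : ∑ i, ∫ ω, Y i ω ^ 2 ∂μ ≤ s) (x : ℝ) :
    μ.real {ω | x ≤ ∑ i, Y i ω} ≤ exp (-l * x + (exp (l * a) - 1 - l * a) / a ^ 2 * s) := by
  set c := (exp (l * a) - 1 - l * a) / a ^ 2
  have hc : 0 ≤ c := div_nonneg (by linarith [add_one_le_exp (l * a)]) (sq_nonneg a)
  have hint : Integrable (fun ω => exp (l * (∑ i, Y i) ω)) μ :=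
    hind.integrable_exp_mul_sum hYm fun i _ =>
      integrable_exp_mul_of_le l a hl.le (hYm i).aemeasurable (hY i)
  calc μ.real {ω | x ≤ ∑ i, Y i ω} ≤ exp (-l * x) * mgf (∑ i, Y i) μ l := by
        simpa only [Finset.sum_apply] using measure_ge_le_exp_mul_mgf x hl.le hint
    _ = exp (-l * x) * ∏ i, mgf (Y i) μ l := by rw [hind.mgf_sum hYm]
    _ ≤ exp (-l * x) * ∏ i, exp (c * ∫ ω, Y i ω ^ 2 ∂μ) := by
        gcongr with i
        · exact fun i _ => mgf_nonneg
        · exact mgf_le_exp_of_le (hYm i).aemeasurable ha hl (hY i) (hY2 i) (hmean i)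
    _ ≤ exp (-l * x + c * s) := by
        rw [← exp_sum, ← mul_sum, ← exp_add]
        gcongr

lemma measureReal_le_sum_le_add_min [IsFiniteMeasure μ] {ι : Type*} [Fintype ι]
    (X : ι → Ω → ℝ) (x α : ℝ) :
    μ.real {ω | x ≤ ∑ i, X i ω} ≤
      μ.real {ω | ∃ j, α < X j ω} + μ.real {ω | x ≤ ∑ i, min (X i ω) α} := by
  refine (measureReal_mono fun ω hω => ?_).trans (measureReal_union_le _ _)
  by_cases hbig : ∃ j, α < X j ω
  · exact Or.inl hbig
  · push Not at hbig
    right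
    simpa only [Set.mem_ofPred_eq, min_eq_left (hbig _)] using hω

end Probability

theorem stmt8_general {Ω : Type*} [MeasurableSpace Ω] (μ : Measure Ω) [IsProbabilityMeasure μ]
    (n : ℕ) (X : Fin n → Ω → ℝ)
    (hXm : ∀ i, Measurable (X i))
    (hind : ProbabilityTheory.iIndepFun X μ)
    (hX2 : ∀ i, Integrable (fun ω => X i ω ^ 2) μ)
    (hmean : ∀ i, ∫ ω, X i ω ∂μ = 0)
    (B : ℝ) (hB : B = ∑ i, ∫ ω, X i ω ^ 2 ∂μ) (hBpos : 0 < B) :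
    ∀ x > (0:ℝ), ∀ α > (0:ℝ),
      (μ {ω | x ≤ ∑ i, X i ω}).toReal ≤
        (μ {ω | ∃ j, α < X j ω}).toReal +
          Real.exp (-(x ^ 2) / (2 * (α * x + B)) *
            (1 + (2 / 3) * Real.log (1 + α * x / B))) := by
  intro x hx α hα
  set Y : Fin n → Ω → ℝ := fun i ω => min (X i ω) α
  have hXint (i : Fin n) : Integrable (X i) μ :=
    ((memLp_two_iff_integrable_sq (hXm i).aestronglyMeasurable).2 (hX2 i)).integrable one_le_two
  have hY2 (i : Fin n) : Integrable (fun ω => Y i ω ^ 2) μ :=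
    (hX2 i).sq_min_const (hXm i).aestronglyMeasurable hα.le
  have hYmean (i : Fin n) : μ[Y i] ≤ 0 := hmean i ▸
    integral_mono ((hXint i).inf (integrable_const α)) (hXint i) fun ω => min_le_left _ _
  have hYvar : ∑ i, ∫ ω, Y i ω ^ 2 ∂μ ≤ B := hB ▸
    sum_le_sum fun i _ => integral_mono (hY2 i) (hX2 i) fun ω => sq_min_le_sq hα.le
  have hl : 0 < log (1 + α * x / B) / α :=
    div_pos (log_pos (lt_add_of_pos_right 1 (by positivity))) hα
  have htail := measureReal_le_sum_le_exp (fun i => (hXm i).min measurable_const)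
    (hind.comp _ fun _ => measurable_id.min measurable_const) hα hl
    (fun i => ae_of_all _ fun ω => min_le_right _ _) hY2 hYmean hYvar x
  calc (μ {ω | x ≤ ∑ i, X i ω}).toReal
      ≤ μ.real {ω | ∃ j, α < X j ω} + μ.real {ω | x ≤ ∑ i, Y i ω} :=
        measureReal_le_sum_le_add_min X x α
    _ ≤ _ := add_le_add le_rfl (htail.trans (exp_le_exp.2 (bennett_exponent_le hα hx hBpos)))

theorem stmt8 {Ω : Type*} [MeasurableSpace Ω] (μ : Measure Ω) [IsProbabilityMeasure μ]
    (n : ℕ) (hn : 0 < n) (X : Fin n → Ω → ℝ)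
    (hXm : ∀ i, Measurable (X i))
    (hind : ProbabilityTheory.iIndepFun X μ)
    (hX2 : ∀ i, Integrable (fun ω => X i ω ^ 2) μ)
    (hmean : ∀ i, ∫ ω, X i ω ∂μ = 0)
    (B : ℝ) (hB : B = ∑ i, ∫ ω, X i ω ^ 2 ∂μ) (hBpos : 0 < B) :
    ∀ x > (0:ℝ), ∀ α > (0:ℝ),
      (μ {ω | x ≤ ∑ i, X i ω}).toReal ≤
        (μ {ω | ∃ j, α < X j ω}).toReal +
          Real.exp (-(x ^ 2) / (2 * (α * x + B)) *
            (1 + (2 / 3) * Real.log (1 + α * x / B))) :=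
  stmt8_general μ n X hXm hind hX2 hmean B hB hBpos
end

section
/- Let X₁,…,X_n be independent mean-zero random variables in L^ν for 1 ≤ ν ≤ 2. Then E[((∑_{i=1}^n X_i)⁺)^ν] ≤ 4·∑_{k=1}^n E[|X_k|^ν]. -/
/-!
For `1 ≤ p ≤ 2` one has the pointwise bound
`|x + y| ^ p ≤ |x| ^ p + p |x| ^ (p - 2) x y + 2 |y| ^ p`, obtained by scaling from a
one-variable inequality for `|1 + t| ^ p`. Taking `x` a partial sum and `y` an independent
mean-zero summand, the middle term has expectation `p E[|x| ^ (p - 2) x] E[y] = 0`, so by induction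
`E |∑ X_k| ^ p ≤ 2 ∑ E |X_k| ^ p` (von Bahr–Esseen); finally `(S⁺) ^ p ≤ |S| ^ p`.
-/

open MeasureTheory Real ProbabilityTheory Finset

lemma one_add_rpow_le_of_nonneg {p t : ℝ} (hp1 : 1 ≤ p) (hp2 : p ≤ 2) (ht : 0 ≤ t) :
    (1 + t) ^ p ≤ 1 + p * t + t ^ p := by
  let F : ℝ → ℝ := fun u => 1 + p * u + u ^ p - (1 + u) ^ p
  have hF : MonotoneOn F (Set.Ici 0) := by
    refine monotoneOn_of_hasDerivWithinAt_nonneg (convex_Ici 0)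
      (Continuous.continuousOn (by unfold F; fun_prop (disch := linarith)))
      (f' := fun u => p + p * u ^ (p - 1) - p * (1 + u) ^ (p - 1)) (fun u hu => ?_)
      (fun u hu => ?_) <;> rw [interior_Ici] at hu
    · refine HasDerivAt.hasDerivWithinAt ?_
      exact ((((hasDerivAt_id u).const_mul p).const_add 1).add
        (hasDerivAt_rpow_const (Or.inl hu.ne'))).sub
        (((hasDerivAt_id u).const_add 1).rpow_const (Or.inl (by simp; linarith [hu.out])))
        |>.congr_deriv (by simp)
    · have := rpow_add_le_add_rpow zero_le_one hu.out.le (by linarith : 0 ≤ p - 1)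
        (by linarith)
      rw [one_rpow] at this
      nlinarith
  simpa [F, zero_rpow (by linarith : p ≠ 0)] using hF Set.self_mem_Ici ht ht

lemma one_sub_rpow_le {p u : ℝ} (hp1 : 1 ≤ p) (hp2 : p ≤ 2) (hu0 : 0 ≤ u) (hu1 : u ≤ 1) :
    (1 - u) ^ p ≤ 1 - p * u + u ^ p := by
  let G : ℝ → ℝ := fun u => 1 - p * u + u ^ p - (1 - u) ^ p
  have hG : MonotoneOn G (Set.Icc 0 1) := by
    refine monotoneOn_of_hasDerivWithinAt_nonneg (convex_Icc 0 1)
      (Continuous.continuousOn (by unfold G; fun_prop (disch := linarith)))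
      (f' := fun v => -p + p * v ^ (p - 1) + p * (1 - v) ^ (p - 1)) (fun v hv => ?_)
      (fun v hv => ?_) <;> rw [interior_Icc] at hv
    · refine HasDerivAt.hasDerivWithinAt ?_
      exact ((((hasDerivAt_id v).const_mul p).const_sub 1).add
        (hasDerivAt_rpow_const (Or.inl hv.1.ne'))).sub
        (((hasDerivAt_id v).const_sub 1).rpow_const (Or.inl (by simp; linarith [hv.2])))
        |>.congr_deriv (by simp)
    · have h1 := self_le_rpow_of_le_one hv.1.le hv.2.le (by linarith : p - 1 ≤ 1)
      have h2 := self_le_rpow_of_le_one (by linarith [hv.2] : 0 ≤ 1 - v) (by linarith [hv.1])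
        (by linarith : p - 1 ≤ 1)
      nlinarith
  simpa [G, zero_rpow (by linarith : p ≠ 0)] using
    hG (Set.left_mem_Icc.2 zero_le_one) ⟨hu0, hu1⟩ hu0

lemma abs_one_add_rpow_le {p : ℝ} (hp1 : 1 ≤ p) (hp2 : p ≤ 2) (t : ℝ) :
    |1 + t| ^ p ≤ 1 + p * t + 2 * |t| ^ p := by
  rcases le_or_gt 0 t with ht | ht
  · rw [abs_of_nonneg (by linarith), abs_of_nonneg ht]
    linarith [one_add_rpow_le_of_nonneg hp1 hp2 ht, rpow_nonneg ht p]
  rcases le_or_gt (-1) t with ht1 | ht1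
  · rw [abs_of_nonneg (by linarith), abs_of_neg ht]
    have := one_sub_rpow_le hp1 hp2 (neg_nonneg.2 ht.le) (by linarith)
    rw [sub_neg_eq_add] at this
    linarith [rpow_nonneg (neg_nonneg.2 ht.le) p]
  · -- with `s = -t - 1 ≥ 0`, both `s ^ p` and `1 + p * s` are at most `(1 + s) ^ p = |t| ^ p`
    obtain ⟨s, hs, rfl⟩ : ∃ s, 0 ≤ s ∧ t = -1 - s := ⟨-1 - t, by linarith, by ring⟩
    rw [abs_of_nonpos (by linarith), abs_of_neg ht, show -(1 + (-1 - s)) = s by ring,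
      show -(-1 - s) = 1 + s by ring]
    have h1 := one_add_mul_self_le_rpow_one_add (by linarith : -1 ≤ s) hp1
    have h2 := rpow_le_rpow hs (by linarith : s ≤ 1 + s) (by linarith : 0 ≤ p)
    nlinarith

lemma abs_add_rpow_le {p : ℝ} (hp1 : 1 ≤ p) (hp2 : p ≤ 2) (x y : ℝ) :
    |x + y| ^ p ≤ |x| ^ p + p * (|x| ^ (p - 2) * x * y) + 2 * |y| ^ p := by
  rcases eq_or_ne x 0 with rfl | hx
  · simp [zero_rpow (by linarith : p ≠ 0)]
    linarith [rpow_nonneg (abs_nonneg y) p]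
  have hax : 0 < |x| := abs_pos.2 hx
  have hxt : x + y = x * (1 + y / x) := by field_simp
  have hpow : |x| ^ p * (y / x) = |x| ^ (p - 2) * x * y := by
    rw [show |x| ^ p = |x| ^ (p - 2) * x ^ 2 by
      rw [← sq_abs, ← rpow_natCast, ← rpow_add hax]; norm_num]
    field_simp
  have hy : |x| ^ p * |y / x| ^ p = |y| ^ p := by
    rw [← mul_rpow hax.le (abs_nonneg _), ← abs_mul, mul_div_cancel₀ _ hx]
  calc |x + y| ^ p = |x| ^ p * |1 + y / x| ^ p := by
        rw [hxt, abs_mul, mul_rpow hax.le (abs_nonneg _)]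
    _ ≤ |x| ^ p * (1 + p * (y / x) + 2 * |y / x| ^ p) := by
        gcongr; exact abs_one_add_rpow_le hp1 hp2 _
    _ = |x| ^ p + p * (|x| ^ (p - 2) * x * y) + 2 * |y| ^ p := by
        rw [← hpow, ← hy]; ring

lemma abs_abs_rpow_sub_two_mul_self_le {p : ℝ} (hp1 : 1 ≤ p) (x : ℝ) :
    |(|x| ^ (p - 2) * x)| ≤ 1 + |x| ^ p := by
  rcases eq_or_ne x 0 with rfl | hx
  · simp [zero_rpow (by linarith : p ≠ 0)]
  have hax : 0 < |x| := abs_pos.2 hx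
  rw [abs_mul, abs_of_nonneg (by positivity), ← rpow_add_one hax.ne']
  rcases le_total |x| 1 with h | h
  · linarith [rpow_le_one hax.le h (by linarith : 0 ≤ p - 2 + 1), rpow_nonneg hax.le p]
  · linarith [rpow_le_rpow_of_exponent_le h (by linarith : p - 2 + 1 ≤ p)]

section Moments

variable {Ω : Type*} [MeasurableSpace Ω] {μ : Measure Ω} {p : ℝ}

lemma integrable_abs_rpow_iff_memLp {f : Ω → ℝ} (hf : AEStronglyMeasurable f μ) (hp : 0 < p) :
    Integrable (fun ω => |f ω| ^ p) μ ↔ MemLp f (ENNReal.ofReal p) μ := by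
  have h := integrable_norm_rpow_iff hf (by simpa using hp) ENNReal.ofReal_ne_top
  rwa [ENNReal.toReal_ofReal hp.le] at h

variable [IsProbabilityMeasure μ]

lemma integral_abs_add_rpow_le (hp1 : 1 ≤ p) (hp2 : p ≤ 2) {f g : Ω → ℝ} (hfg : IndepFun f g μ)
    (hf : MemLp f (ENNReal.ofReal p) μ) (hg : MemLp g (ENNReal.ofReal p) μ)
    (hg0 : ∫ ω, g ω ∂μ = 0) :
    ∫ ω, |f ω + g ω| ^ p ∂μ ≤ ∫ ω, |f ω| ^ p ∂μ + 2 * ∫ ω, |g ω| ^ p ∂μ := by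
  have hp1' : 1 ≤ ENNReal.ofReal p := by simpa using hp1
  have habs {h : Ω → ℝ} (hh : MemLp h (ENNReal.ofReal p) μ) :
      Integrable (fun ω => |h ω| ^ p) μ :=
    (integrable_abs_rpow_iff_memLp hh.1 (by linarith)).2 hh
  let φ : ℝ → ℝ := fun x => |x| ^ (p - 2) * x
  have hφ : Measurable φ := by fun_prop
  have hφf : Integrable (fun ω => φ (f ω)) μ :=
    ((integrable_const 1).add (habs hf)).mono'
      (hφ.comp_aemeasurable hf.1.aemeasurable).aestronglyMeasurable
      (ae_of_all _ fun ω => abs_abs_rpow_sub_two_mul_self_le hp1 (f ω))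
  have hφfg : IndepFun (fun ω => φ (f ω)) g μ := hfg.comp hφ measurable_id
  have hcross : Integrable (fun ω => φ (f ω) * g ω) μ :=
    hφfg.integrable_mul hφf (hg.integrable hp1')
  have hcross0 : ∫ ω, φ (f ω) * g ω ∂μ = 0 := by
    rw [hφfg.integral_fun_mul_eq_mul_integral hφf.aestronglyMeasurable hg.1, hg0, mul_zero]
  calc ∫ ω, |f ω + g ω| ^ p ∂μ
      ≤ ∫ ω, (|f ω| ^ p + p * (φ (f ω) * g ω) + 2 * |g ω| ^ p) ∂μ := by
        refine integral_mono (habs (hf.add hg)) (((habs hf).add (hcross.const_mul p)).add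
          ((habs hg).const_mul 2)) fun ω => ?_
        simpa only [φ, mul_assoc] using abs_add_rpow_le hp1 hp2 (f ω) (g ω)
    _ = ∫ ω, |f ω| ^ p ∂μ + 2 * ∫ ω, |g ω| ^ p ∂μ := by
        rw [integral_add, integral_add, integral_const_mul, integral_const_mul, hcross0,
          mul_zero, add_zero]
        exacts [habs hf, hcross.const_mul p, (habs hf).add (hcross.const_mul p),
          (habs hg).const_mul 2]

lemma integral_abs_sum_rpow_le {ι : Type*} (hp1 : 1 ≤ p) (hp2 : p ≤ 2) {X : ι → Ω → ℝ}
    (hXm : ∀ i, Measurable (X i)) (hind : iIndepFun X μ)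
    (hX : ∀ i, MemLp (X i) (ENNReal.ofReal p) μ) (hmean : ∀ i, ∫ ω, X i ω ∂μ = 0)
    (s : Finset ι) :
    ∫ ω, |∑ i ∈ s, X i ω| ^ p ∂μ ≤ 2 * ∑ i ∈ s, ∫ ω, |X i ω| ^ p ∂μ := by
  classical
  induction s using Finset.induction_on with
  | empty => simp [zero_rpow (by linarith : p ≠ 0)]
  | @insert a s ha ih =>
    have hindep : IndepFun (fun ω => ∑ i ∈ s, X i ω) (X a) μ := by
      simpa only [Finset.sum_fn] using hind.indepFun_finsetSum_of_notMem hXm ha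
    have hsum : MemLp (fun ω => ∑ i ∈ s, X i ω) (ENNReal.ofReal p) μ :=
      memLp_finsetSum s fun i _ => hX i
    simp only [Finset.sum_insert ha, add_comm (X a _)]
    linarith [integral_abs_add_rpow_le hp1 hp2 hindep hsum (hX a) (hmean a)]

end Moments

theorem stmt9 {Ω : Type*} [MeasurableSpace Ω] (μ : Measure Ω) [IsProbabilityMeasure μ]
    (n : ℕ) (X : Fin n → Ω → ℝ)
    (hXm : ∀ i, Measurable (X i))
    (hind : ProbabilityTheory.iIndepFun X μ)
    (ν : ℝ) (hν1 : 1 ≤ ν) (hν2 : ν ≤ 2)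
    (hXν : ∀ i, Integrable (fun ω => |X i ω| ^ ν) μ)
    (hmean : ∀ i, Integrable (X i) μ ∧ ∫ ω, X i ω ∂μ = 0) :
    ∫ ω, (max (∑ i, X i ω) 0) ^ ν ∂μ ≤ 4 * ∑ k, ∫ ω, |X k ω| ^ ν ∂μ := by
  have hν0 : 0 < ν := by linarith
  have hX i : MemLp (X i) (ENNReal.ofReal ν) μ :=
    (integrable_abs_rpow_iff_memLp (hXm i).aestronglyMeasurable hν0).1 (hXν i)
  have hsum : Integrable (fun ω => |∑ i, X i ω| ^ ν) μ :=
    (integrable_abs_rpow_iff_memLp (by fun_prop) hν0).2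
      (memLp_finsetSum _ fun i _ => hX i)
  have hmoments : 0 ≤ ∑ k, ∫ ω, |X k ω| ^ ν ∂μ := by positivity
  calc ∫ ω, (max (∑ i, X i ω) 0) ^ ν ∂μ ≤ ∫ ω, |∑ i, X i ω| ^ ν ∂μ :=
        integral_mono_of_nonneg (ae_of_all _ fun ω => by positivity) hsum (ae_of_all _ fun ω =>
          rpow_le_rpow (le_max_right _ _) (max_le (le_abs_self _) (abs_nonneg _)) hν0.le)
    _ ≤ 2 * ∑ k, ∫ ω, |X k ω| ^ ν ∂μ :=
        integral_abs_sum_rpow_le hν1 hν2 hXm hind hX (fun i => (hmean i).2) _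
    _ ≤ 4 * ∑ k, ∫ ω, |X k ω| ^ ν ∂μ := by linarith
end
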